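/- Let G be a group whose abelianization G_ab is finitely generated and whose derived subgroup G′ = [G,G] has a complement in G. Then the short exact sequence 1 → ∇(G) → G ⊗ G → G ∧ G → 1 splits on the left; consequently G ⊗ G ≅ ∇(G) × (G ∧ G), and hence J(G) ≅ M(G) × ∇(G), i.e. π₃(SK(G,1)) ≅ H₂(G) × ∇(G). -/

import Mathlib

/- Nonabelian tensor square framework (Brown–Loday). -/

namespace NATensor

variable (G : Type*) [Group G]

/-- The relator set for the nonabelian tensor square of `G`:
`g g' ⊗ h = (ᵍg' ⊗ ᵍh)(g ⊗ h)` and `g ⊗ h h' = (g ⊗ h)(ʰg ⊗ ʰh')`. -/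
def rels : Set (FreeGroup (G × G)) :=
  {r | (∃ g g' h : G,
          r = FreeGroup.of (g * g', h) *
              (FreeGroup.of (g * g' * g⁻¹, g * h * g⁻¹) * FreeGroup.of (g, h))⁻¹) ∨
       (∃ g h h' : G,
          r = FreeGroup.of (g, h * h') *
              (FreeGroup.of (g, h) * FreeGroup.of (h * g * h⁻¹, h * h' * h⁻¹))⁻¹)}

/-- The nonabelian tensor square `G ⊗ G`. -/
abbrev TS := PresentedGroup (rels G)

variable {G}

/-- The generator `g ⊗ h` of the nonabelian tensor square. -/
def tmul (g h : G) : TS G := PresentedGroup.of (g, h)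

lemma mk_rel_eq_one {r : FreeGroup (G × G)} (hr : r ∈ rels G) :
    (PresentedGroup.mk (rels G) r : TS G) = 1 :=
  (QuotientGroup.eq_one_iff r).mpr (Subgroup.subset_normalClosure hr)

lemma tmul_rel₁ (g g' h : G) :
    tmul (g * g') h = tmul (g * g' * g⁻¹) (g * h * g⁻¹) * tmul g h := by
  have h1 := mk_rel_eq_one (G := G) (Or.inl ⟨g, g', h, rfl⟩)
  simpa only [tmul, PresentedGroup.of, map_mul, map_inv, mul_inv_eq_one] using h1

lemma tmul_rel₂ (g h h' : G) :
    tmul g (h * h') = tmul g h * tmul (h * g * h⁻¹) (h * h' * h⁻¹) := by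
  have h1 := mk_rel_eq_one (G := G) (Or.inr ⟨g, h, h', rfl⟩)
  simpa only [tmul, PresentedGroup.of, map_mul, map_inv, mul_inv_eq_one] using h1

variable (G)

/-- The homomorphism `κ : G ⊗ G → G`, `g ⊗ h ↦ [g,h] = g h g⁻¹ h⁻¹` (its image is `[G,G]`). -/
def kappa : TS G →* G :=
  PresentedGroup.toGroup (f := fun x : G × G => x.1 * x.2 * x.1⁻¹ * x.2⁻¹) (by
    rintro r (⟨g, g', h, rfl⟩ | ⟨g, h, h', rfl⟩) <;>
      simp only [map_mul, map_inv, FreeGroup.lift_apply_of] <;> group)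

variable {G}

@[simp] lemma kappa_tmul (g h : G) : kappa G (tmul g h) = g * h * g⁻¹ * h⁻¹ :=
  PresentedGroup.toGroup.of _

variable (G)

/-- `J(G) = ker κ ≅ π₃(SK(G,1))`. -/
def J : Subgroup (TS G) := (kappa G).ker

/-- `∇(G)`: the (normal) subgroup of `G ⊗ G` generated by the elements `x ⊗ x`. -/
def nabla : Subgroup (TS G) :=
  Subgroup.normalClosure {t | ∃ x : G, t = tmul x x}

/-- `Δ(G)`: the (normal) subgroup of `G ⊗ G` generated by the `(x ⊗ y)(y ⊗ x)`. -/
def delta : Subgroup (TS G) :=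
  Subgroup.normalClosure {t | ∃ x y : G, t = tmul x y * tmul y x}

instance : (nabla G).Normal := Subgroup.normalClosure_normal

instance : (delta G).Normal := Subgroup.normalClosure_normal

/-- The exterior square `G ∧ G = (G ⊗ G)/∇(G)`. -/
abbrev ES := TS G ⧸ nabla G

/-- The symmetric square `G ⊗̃ G = (G ⊗ G)/Δ(G)`. -/
abbrev SS := TS G ⧸ delta G

variable {G}

/-- The element `g ∧ h` of the exterior square. -/
def emul (g h : G) : ES G := QuotientGroup.mk' (nabla G) (tmul g h)

/-- The image of `g ⊗ h` in the symmetric square. -/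
def smul (g h : G) : SS G := QuotientGroup.mk' (delta G) (tmul g h)

variable {H : Type*} [Group H]

/-- The induced homomorphism `G ⊗ G → H ⊗ H` of a homomorphism `f : G → H`. -/
def tmap (f : G →* H) : TS G →* TS H :=
  PresentedGroup.toGroup (f := fun x : G × G => tmul (f x.1) (f x.2)) (by
    rintro r (⟨g, g', h, rfl⟩ | ⟨g, h, h', rfl⟩) <;>
      simp only [map_mul, map_inv, FreeGroup.lift_apply_of, mul_inv_eq_one]
    · rw [tmul_rel₁]
    · rw [tmul_rel₂])

@[simp] lemma tmap_tmul (f : G →* H) (g h : G) :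
    tmap f (tmul g h) = tmul (f g) (f h) :=
  PresentedGroup.toGroup.of _

lemma nabla_le_comap_nabla (f : G →* H) :
    nabla G ≤ MonoidHom.ker ((QuotientGroup.mk' (nabla H)).comp (tmap f)) := by
  refine Subgroup.normalClosure_le_normal ?_
  rintro _ ⟨y, rfl⟩
  simp only [SetLike.mem_coe, MonoidHom.mem_ker, MonoidHom.comp_apply, tmap_tmul,
    QuotientGroup.mk'_apply, QuotientGroup.eq_one_iff]
  exact Subgroup.subset_normalClosure ⟨f y, rfl⟩

lemma delta_le_comap_delta (f : G →* H) :
    delta G ≤ MonoidHom.ker ((QuotientGroup.mk' (delta H)).comp (tmap f)) := by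
  refine Subgroup.normalClosure_le_normal ?_
  rintro _ ⟨x, y, rfl⟩
  simp only [SetLike.mem_coe, MonoidHom.mem_ker, MonoidHom.comp_apply, map_mul, tmap_tmul,
    QuotientGroup.mk'_apply, ← QuotientGroup.mk_mul, QuotientGroup.eq_one_iff]
  exact Subgroup.subset_normalClosure ⟨f x, f y, rfl⟩

/-- The induced homomorphism `G ∧ G → H ∧ H` of a homomorphism `f : G → H`. -/
def emap (f : G →* H) : ES G →* ES H :=
  QuotientGroup.lift (nabla G) ((QuotientGroup.mk' (nabla H)).comp (tmap f))
    (fun x hx => MonoidHom.mem_ker.mp (nabla_le_comap_nabla f hx))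

@[simp] lemma emap_emul (f : G →* H) (g h : G) :
    emap f (emul g h) = emul (f g) (f h) := by
  simp [emap, emul, QuotientGroup.mk'_apply, QuotientGroup.lift_mk']
  rfl

/-- The induced homomorphism `G ⊗̃ G → H ⊗̃ H` of a homomorphism `f : G → H`. -/
def smap (f : G →* H) : SS G →* SS H :=
  QuotientGroup.lift (delta G) ((QuotientGroup.mk' (delta H)).comp (tmap f))
    (fun x hx => MonoidHom.mem_ker.mp (delta_le_comap_delta f hx))

variable (G)

lemma nabla_le_ker_kappa : nabla G ≤ (kappa G).ker := by
  refine Subgroup.normalClosure_le_normal ?_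
  rintro _ ⟨x, rfl⟩
  simp only [SetLike.mem_coe, MonoidHom.mem_ker, kappa_tmul]
  group

/-- The homomorphism `κ' : G ∧ G → G`, `g ∧ h ↦ [g,h]` (its image is `[G,G]`). -/
def kappa' : ES G →* G :=
  QuotientGroup.lift (nabla G) (kappa G)
    (fun x hx => MonoidHom.mem_ker.mp (nabla_le_ker_kappa G hx))

/-- The Schur multiplier `M(G) = ker κ' ≅ H₂(G)`. -/
def M : Subgroup (ES G) := (kappa' G).ker

/-- `J̃(G) = J(G)/Δ(G) ≅ π₂ˢ(K(G,1))`, realized as the image of `J(G)` in `G ⊗̃ G`. -/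
def Jt : Subgroup (SS G) := Subgroup.map (QuotientGroup.mk' (delta G)) (J G)

/-- `∇(G)/Δ(G)`, realized as the image of `∇(G)` in `G ⊗̃ G`. -/
def nablaBar : Subgroup (SS G) := Subgroup.map (QuotientGroup.mk' (delta G)) (nabla G)

end NATensor

/-!
A retraction `G ⊗ G → ∇(G)` splits both sequences. Since `[G,G]` has a complement, there is a
section `σ : G_ab → G` with commutative image, and `x ⊗ x` depends only on the class of `x` in
`G_ab`: the crossed-module identities give `[a,b] ⊗ w = (a ⊗ b) ʷ(a ⊗ b)⁻¹` and
`w ⊗ [a,b] = ʷ(a ⊗ b)(a ⊗ b)⁻¹`, whence `(cw) ⊗ (cw) = w ⊗ w` for `c ∈ [G,G]`. So a bilinear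
`F : G_ab × G_ab → ∇(G)` with `F(a, a) = σa ⊗ σa` yields the retraction `g ⊗ h ↦ F(ḡ, h̄)`.
The form `Q(a, b) = σa ⊗ σb` is bilinear and central but need not lie in `∇(G)`. Splitting the
finitely generated group `G_ab` into cyclic factors, `x = ∏ₖ xₖ`, its triangular part
`F(x, y) = ∏ₖ Q(xₖ, yₖ) · ∏_{k<l} Q(xₖ, yₗ) Q(yₗ, xₖ)` has the same diagonal, and every factor is
a product of diagonal values `Q(a, a) = σa ⊗ σa ∈ ∇(G)`: on a cyclic factor `Q(gᵐ, gⁿ) = Q(g, g)ᵐⁿ`,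
and `Q(a, b) Q(b, a) = Q(ab, ab) Q(a, a)⁻¹ Q(b, b)⁻¹`.
-/

section

open Finset

lemma Finset.prod_prod_eq_prod_mul_prod_lt {ι M : Type*} [Fintype ι] [LinearOrder ι]
    [CommMonoid M] (f : ι → ι → M) :
    ∏ k, ∏ l, f k l = (∏ k, f k k) * ∏ k, ∏ l with k < l, f k l * f l k := by
  have split (k : ι) : ∏ l, f k l = f k k * ((∏ l with k < l, f k l) * ∏ l with l < k, f k l) := by
    rw [← mul_prod_erase univ (f k) (mem_univ k), ← prod_union]
    · congr 2
      ext l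
      simp [ne_comm, lt_or_lt_iff_ne]
    · exact disjoint_filter.mpr fun l _ hkl hlk => lt_asymm hkl hlk
  have swap : ∏ k, ∏ l with l < k, f k l = ∏ k, ∏ l with k < l, f l k :=
    prod_comm' (by simp)
  rw [prod_congr rfl fun k _ => split k, prod_mul_distrib, prod_mul_distrib, swap,
    ← prod_mul_distrib]
  simp only [← prod_mul_distrib]

lemma MonoidHom.map_mem_zpowers {G H : Type*} [Group G] [Group H] (f : G →* H) {g x : G}
    (hx : x ∈ Subgroup.zpowers g) : f x ∈ Subgroup.zpowers (f g) :=
  MonoidHom.map_zpowers f g ▸ Subgroup.mem_map_of_mem f hx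

structure CyclicDecomposition (A : Type*) [CommGroup A] where
  ι : Type
  [fintype : Fintype ι]
  proj : ι → A →* A
  gen : ι → A
  prod_proj (x : A) : ∏ i, proj i x = x
  proj_mem_zpowers (i : ι) (x : A) : proj i x ∈ Subgroup.zpowers (gen i)

attribute [instance] CyclicDecomposition.fintype

namespace CyclicDecomposition

variable {A B C : Type*} [CommGroup A] [CommGroup B] [CommGroup C]

noncomputable def pi {κ : Type} [Fintype κ] [DecidableEq κ] (Z : κ → Type*)
    [∀ k, CommGroup (Z k)] [∀ k, IsCyclic (Z k)] : CyclicDecomposition (∀ k, Z k) where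
  ι := κ
  proj k := (MonoidHom.mulSingle Z k).comp (Pi.evalMonoidHom Z k)
  gen k := Pi.mulSingle k (IsCyclic.exists_generator (α := Z k)).choose
  prod_proj := univ_prod_mulSingle
  proj_mem_zpowers k x :=
    (MonoidHom.mulSingle Z k).map_mem_zpowers
      ((IsCyclic.exists_generator (α := Z k)).choose_spec (x k))

def prod (d₁ : CyclicDecomposition A) (d₂ : CyclicDecomposition B) :
    CyclicDecomposition (A × B) where
  ι := d₁.ι ⊕ d₂.ι
  proj := Sum.elim (fun i => (MonoidHom.inl A B).comp ((d₁.proj i).comp (MonoidHom.fst A B)))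
    (fun i => (MonoidHom.inr A B).comp ((d₂.proj i).comp (MonoidHom.snd A B)))
  gen := Sum.elim (fun i => MonoidHom.inl A B (d₁.gen i)) (fun i => MonoidHom.inr A B (d₂.gen i))
  prod_proj x := by
    ext <;> simp [Fintype.prod_sum_type, Prod.fst_prod, Prod.snd_prod, d₁.prod_proj, d₂.prod_proj]
  proj_mem_zpowers
    | .inl i, x => (MonoidHom.inl A B).map_mem_zpowers (d₁.proj_mem_zpowers i x.1)
    | .inr i, x => (MonoidHom.inr A B).map_mem_zpowers (d₂.proj_mem_zpowers i x.2)

def congr (d : CyclicDecomposition A) (e : A ≃* B) : CyclicDecomposition B where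
  ι := d.ι
  proj i := e.toMonoidHom.comp ((d.proj i).comp e.symm.toMonoidHom)
  gen i := e (d.gen i)
  prod_proj x := by
    simp only [MonoidHom.comp_apply, MulEquiv.coe_toMonoidHom, ← map_prod, d.prod_proj,
      MulEquiv.apply_symm_apply]
  proj_mem_zpowers i x := e.toMonoidHom.map_mem_zpowers (d.proj_mem_zpowers i (e.symm x))

theorem nonempty_of_fg (A : Type*) [CommGroup A] [Group.FG A] :
    Nonempty (CyclicDecomposition A) := by
  classical
  obtain ⟨ι, j, _, _, p, _, e, ⟨φ⟩⟩ := CommGroup.equiv_free_prod_prod_multiplicative_zmod A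
  exact ⟨((pi _).prod (pi _)).congr φ.symm⟩

variable (d : CyclicDecomposition A) [LinearOrder d.ι]

def triangular (Q : A →* A →* C) : A →* A →* C :=
  (∏ k, (Q.comp (d.proj k)).compl₂ (d.proj k)) *
    ∏ k, ∏ l with k < l, ((Q * Q.flip).comp (d.proj k)).compl₂ (d.proj l)

lemma triangular_apply (Q : A →* A →* C) (x y : A) :
    d.triangular Q x y = (∏ k, Q (d.proj k x) (d.proj k y)) *
      ∏ k, ∏ l with k < l, Q (d.proj k x) (d.proj l y) * Q (d.proj l y) (d.proj k x) := by
  simp [triangular, MonoidHom.finsetProd_apply]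

lemma triangular_apply_self (Q : A →* A →* C) (x : A) : d.triangular Q x x = Q x x := by
  calc d.triangular Q x x = ∏ k, ∏ l, Q (d.proj k x) (d.proj l x) := by
        rw [triangular_apply, prod_prod_eq_prod_mul_prod_lt]
    _ = Q (∏ k, d.proj k x) (∏ l, d.proj l x) := by
        simp only [map_prod, MonoidHom.finsetProd_apply]
        exact prod_comm
    _ = Q x x := by rw [d.prod_proj]

lemma triangular_mem_closure (Q : A →* A →* C) (x y : A) :
    d.triangular Q x y ∈ Subgroup.closure (Set.range fun a => Q a a) := by
  set S := Subgroup.closure (Set.range fun a => Q a a)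
  have diag_mem (a : A) : Q a a ∈ S := Subgroup.subset_closure ⟨a, rfl⟩
  have cyclic_mem (g a b : A) (ha : a ∈ Subgroup.zpowers g) (hb : b ∈ Subgroup.zpowers g) :
      Q a b ∈ S := by
    obtain ⟨m, rfl⟩ := Subgroup.mem_zpowers_iff.mp ha
    obtain ⟨n, rfl⟩ := Subgroup.mem_zpowers_iff.mp hb
    rw [map_zpow (Q (g ^ m)), ← MonoidHom.flip_apply Q, map_zpow, MonoidHom.flip_apply]
    exact zpow_mem (zpow_mem (diag_mem g) m) n
  have symm_mem (a b : A) : Q a b * Q b a ∈ S := by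
    have h : Q (a * b) (a * b) = Q a a * Q b b * (Q a b * Q b a) := by
      simp only [map_mul, MonoidHom.mul_apply]
      ac_rfl
    rw [eq_inv_mul_of_mul_eq h.symm]
    exact mul_mem (inv_mem (mul_mem (diag_mem a) (diag_mem b))) (diag_mem _)
  rw [triangular_apply]
  exact mul_mem (prod_mem fun k _ => cyclic_mem _ _ _ (d.proj_mem_zpowers k x)
    (d.proj_mem_zpowers k y)) (prod_mem fun k _ => prod_mem fun l _ => symm_mem _ _)

end CyclicDecomposition

end

section

variable {K : Type*} [Group K] {N : Subgroup K} [N.Normal]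

noncomputable def Subgroup.mulEquivProdMapOfRetraction (r : K →* N) (hr : ∀ n : N, r n = n)
    {H : Subgroup K} (hNH : N ≤ H) : H ≃* N × H.map (QuotientGroup.mk' N) := by
  refine MulEquiv.ofBijective ((r.comp H.subtype).prod ((QuotientGroup.mk' N).subgroupMap H))
    ⟨(injective_iff_map_eq_one _).mpr fun h hh => ?_, fun ⟨n, q⟩ => ?_⟩
  · obtain ⟨hr1, hq1⟩ := Prod.ext_iff.mp hh
    have hhN : (h : K) ∈ N := (QuotientGroup.eq_one_iff _).mp (congrArg Subtype.val hq1)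
    have hrh : r h = ⟨h, hhN⟩ := hr ⟨h, hhN⟩
    simp only [MonoidHom.prod_apply, MonoidHom.comp_apply, Subgroup.coe_subtype, hrh,
      Prod.fst_one] at hr1
    exact Subtype.ext (congrArg Subtype.val hr1 :)
  · obtain ⟨_, ⟨h, hH, rfl⟩⟩ := q
    refine ⟨⟨n * h * (r h : K)⁻¹, mul_mem (mul_mem (hNH n.2) hH) (inv_mem (hNH (r h).2))⟩, ?_⟩
    ext
    · simp [hr]
    · simp [QuotientGroup.eq_one_iff]

noncomputable def QuotientGroup.mulEquivProdOfRetraction (r : K →* N) (hr : ∀ n : N, r n = n) :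
    K ≃* N × K ⧸ N :=
  Subgroup.topEquiv.symm.trans <| (Subgroup.mulEquivProdMapOfRetraction r hr le_top).trans <|
    MulEquiv.prodCongr (MulEquiv.refl N) <|
      (MulEquiv.subgroupCongr (Subgroup.map_top_of_surjective _
        (QuotientGroup.mk'_surjective N))).trans Subgroup.topEquiv

end

lemma Abelianization.exists_section_of_sup_eq_top_of_inf_eq_bot {G : Type*} [Group G]
    {B : Subgroup G} (hB1 : commutator G ⊔ B = ⊤) (hB2 : commutator G ⊓ B = ⊥) :
    ∃ σ : Abelianization G →* G, ∀ a, Abelianization.of (σ a) = a := by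
  have hc : B.IsComplement' (commutator G) := by
    refine Subgroup.isComplement'_of_disjoint_and_mul_eq_univ
      (disjoint_iff.mpr (by rw [inf_comm, hB2])) ?_
    rw [← Subgroup.mul_normal, sup_comm, hB1, Subgroup.coe_top]
  refine ⟨B.subtype.comp hc.QuotientMulEquiv.toMonoidHom, fun a => ?_⟩
  exact Subgroup.IsComplement.quotientGroupMk_leftQuotientEquiv hc a

namespace NATensor

open scoped commutatorElement IsMulCommutative

variable {G : Type*} [Group G]

@[simp] lemma tmul_one_left (h : G) : tmul (1 : G) h = 1 := by
  simpa using tmul_rel₁ (1 : G) 1 h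

/-- `act g t` is `ᵍt`. -/
def act (g : G) : TS G →* TS G := tmap (MulAut.conj g).toMonoidHom

@[simp] lemma act_tmul (g x y : G) :
    act g (tmul x y) = tmul (g * x * g⁻¹) (g * y * g⁻¹) := by
  simp [act]

lemma act_act (g h : G) (t : TS G) : act g (act h t) = act (g * h) t := by
  suffices (act g).comp (act h) = act (g * h) from DFunLike.congr_fun this t
  refine PresentedGroup.ext fun x => ?_
  change act g (act h (tmul x.1 x.2)) = act (g * h) (tmul x.1 x.2)
  simp only [act_tmul, mul_inv_rev]
  congr 1 <;> group

@[simp] lemma act_one (t : TS G) : act (1 : G) t = t := by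
  suffices act (1 : G) = MonoidHom.id _ from DFunLike.congr_fun this t
  refine PresentedGroup.ext fun x => ?_
  change act 1 (tmul x.1 x.2) = tmul x.1 x.2
  simp

lemma tmul_mul_left (g x h : G) : tmul (g * x) h = act g (tmul x h) * tmul g h := by
  rw [act_tmul]; exact tmul_rel₁ g x h

lemma tmul_mul_right (g h k : G) : tmul g (h * k) = tmul g h * act h (tmul g k) := by
  rw [act_tmul]; exact tmul_rel₂ g h k

lemma act_inv_tmul_left (g h : G) : act g⁻¹ (tmul g h) = (tmul g⁻¹ h)⁻¹ := by
  have h1 := tmul_mul_left g⁻¹ g h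
  rw [inv_mul_cancel, tmul_one_left] at h1
  exact eq_inv_of_mul_eq_one_left h1.symm

lemma tmul_inv_conj_right (g b w : G) :
    tmul g (b⁻¹ * w * b) = tmul (g * b⁻¹) w * (tmul b⁻¹ w)⁻¹ := by
  have h := tmul_mul_left b⁻¹ (b * g * b⁻¹) w
  rw [act_tmul, show b⁻¹ * (b * g * b⁻¹) = g * b⁻¹ by group, inv_inv,
    inv_mul_cancel_right] at h
  rw [h, mul_inv_cancel_right]

lemma act_act_mul_tmul (g h : G) (s : TS G) :
    act g (act h s) * tmul g h = tmul g h * act h (act g s) := by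
  -- expand `gx ⊗ hy` in the two possible orders
  have on_tmul (x y : G) :
      act g (act h (tmul x y)) * tmul g h = tmul g h * act h (act g (tmul x y)) := by
    have expand₁ : tmul (g * x) (h * y)
        = act g (tmul x h) * (act g (act h (tmul x y)) * (tmul g h * act h (tmul g y))) := by
      rw [tmul_mul_left g x, tmul_mul_right x h y, tmul_mul_right g h y, map_mul]
      simp only [mul_assoc]
    have expand₂ : tmul (g * x) (h * y)
        = act g (tmul x h) * (tmul g h * (act h (act g (tmul x y)) * act h (tmul g y))) := by
      rw [tmul_mul_right (g * x) h y, tmul_mul_left g x h, tmul_mul_left g x y, map_mul]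
      simp only [mul_assoc]
    have e := mul_left_cancel (expand₁.symm.trans expand₂)
    rw [← mul_assoc, ← mul_assoc] at e
    exact mul_right_cancel e
  suffices (act g).comp (act h)
      = (MulAut.conj (tmul g h)).toMonoidHom.comp ((act h).comp (act g)) by
    have hs := DFunLike.congr_fun this s
    simp only [MonoidHom.comp_apply, MulEquiv.coe_toMonoidHom, MulAut.conj_apply] at hs
    rw [hs, inv_mul_cancel_right]
  refine PresentedGroup.ext fun x => ?_
  change act g (act h (tmul x.1 x.2)) = tmul g h * act h (act g (tmul x.1 x.2)) * (tmul g h)⁻¹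
  rw [← on_tmul, mul_inv_cancel_right]

lemma kappa_tmul_eq_commutatorElement (g h : G) : kappa G (tmul g h) = ⁅g, h⁆ := by
  rw [kappa_tmul, commutatorElement_def]

lemma conj_eq_act_kappa (t s : TS G) : t * s * t⁻¹ = act (kappa G t) s := by
  have ht : t ∈ Subgroup.closure (Set.range (PresentedGroup.of (rels := rels G))) :=
    PresentedGroup.closure_range_of _ ▸ Subgroup.mem_top t
  induction ht using Subgroup.closure_induction generalizing s with
  | mem _ hx =>
    obtain ⟨⟨a, b⟩, rfl⟩ := hx
    change tmul a b * s * (tmul a b)⁻¹ = act (kappa G (tmul a b)) s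
    have key := act_act_mul_tmul a b (act (b * a)⁻¹ s)
    rw [act_act b a, act_act (b * a), mul_inv_cancel, act_one, act_act a b, act_act (a * b)] at key
    rw [kappa_tmul, ← key, mul_inv_cancel_right]
    congr 2
    group
  | one => simp
  | mul x y _ _ ihx ihy =>
    rw [show x * y * s * (x * y)⁻¹ = x * (y * s * y⁻¹) * x⁻¹ by group, ihy, ihx, map_mul,
      act_act]
  | inv x _ ih =>
    have h := ih (act (kappa G x)⁻¹ s)
    rw [act_act, mul_inv_cancel, act_one] at h
    calc x⁻¹ * s * x⁻¹⁻¹ = x⁻¹ * (x * act (kappa G x)⁻¹ s * x⁻¹) * x := by rw [h, inv_inv]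
      _ = act (kappa G x⁻¹) s := by rw [map_inv]; group

lemma act_commutatorElement (a b : G) (s : TS G) :
    act ⁅a, b⁆ s = tmul a b * s * (tmul a b)⁻¹ := by
  rw [conj_eq_act_kappa, kappa_tmul_eq_commutatorElement]

lemma mem_center_of_kappa_eq_one {t : TS G} (ht : kappa G t = 1) : t ∈ Subgroup.center (TS G) :=
  Subgroup.mem_center_iff.mpr fun s => by
    have h := conj_eq_act_kappa t s
    rw [ht, act_one, mul_inv_eq_iff_eq_mul] at h
    exact h.symm

lemma tmul_mem_center_of_commute {g h : G} (hgh : Commute g h) :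
    tmul g h ∈ Subgroup.center (TS G) :=
  mem_center_of_kappa_eq_one (by rw [kappa_tmul, hgh.eq]; group)

lemma tmul_self_mem_center (g : G) : tmul g g ∈ Subgroup.center (TS G) :=
  tmul_mem_center_of_commute (Commute.refl g)

lemma tmul_mul_left_swap (g b w : G) :
    tmul (g * b) w * act w (tmul g b) = tmul g b * tmul (b * g) w := by
  have key := act_act_mul_tmul g b (act b⁻¹ (tmul b w))
  rw [act_act b b⁻¹, mul_inv_cancel, act_one, act_act b g] at key
  have hb : act b (tmul b⁻¹ w) = (tmul b w)⁻¹ := by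
    simpa only [inv_inv] using act_inv_tmul_left b⁻¹ w
  have hconj : act g (act b⁻¹ (tmul b w)) * tmul g (b⁻¹ * w * b)
      = tmul g w * (tmul b⁻¹ w)⁻¹ := by
    rw [act_inv_tmul_left, map_inv, tmul_inv_conj_right, tmul_mul_left]
    group
  calc tmul (g * b) w * act w (tmul g b)
      = act g (tmul b w) * tmul g (b * (b⁻¹ * w * b)) := by
        rw [tmul_mul_left, show b * (b⁻¹ * w * b) = w * b by group, tmul_mul_right g w b]
        group
    _ = tmul g b * act b (act g (act b⁻¹ (tmul b w)) * tmul g (b⁻¹ * w * b)) := by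
        rw [tmul_mul_right, ← mul_assoc, key, map_mul, act_act b g, mul_assoc]
    _ = tmul g b * tmul (b * g) w := by
        rw [hconj, map_mul, map_inv, hb, inv_inv, ← tmul_mul_left]

lemma tmul_commutatorElement_left (a b w : G) :
    tmul ⁅a, b⁆ w = tmul a b * (act w (tmul a b))⁻¹ := by
  have h := tmul_mul_left ⁅a, b⁆ (b * a) w
  rw [show ⁅a, b⁆ * (b * a) = a * b by group, act_commutatorElement,
    eq_mul_inv_of_mul_eq (tmul_mul_left_swap a b w)] at h
  rw [eq_inv_mul_of_mul_eq h.symm]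
  group

lemma tmul_commutatorElement_right (a b w : G) :
    tmul w ⁅a, b⁆ = act w (tmul a b) * (tmul a b)⁻¹ := by
  have h := tmul_mul_right w ⁅a, b⁆ (b * a)
  rw [show ⁅a, b⁆ * (b * a) = a * b by group, act_commutatorElement] at h
  have swap : tmul w (a * b) * tmul a b = act w (tmul a b) * tmul w (b * a) :=
    calc tmul w (a * b) * tmul a b = tmul w a * tmul (a * w) b := by
          rw [tmul_mul_right, tmul_mul_left a w b, mul_assoc]
      _ = tmul (w * a) b * act b (tmul w a) := (tmul_mul_left_swap w a b).symm
      _ = act w (tmul a b) * tmul w (b * a) := by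
          rw [tmul_mul_left w a b, tmul_mul_right w b a, mul_assoc]
  rw [eq_mul_inv_of_mul_eq h.symm, eq_mul_inv_of_mul_eq swap]
  group

lemma tmul_commutatorElement_self (a b : G) : tmul ⁅a, b⁆ ⁅a, b⁆ = 1 := by
  rw [tmul_commutatorElement_left, act_commutatorElement]
  group

lemma tmul_self_commutatorElement_mul (a b w : G) :
    tmul (⁅a, b⁆ * w) (⁅a, b⁆ * w) = tmul w w := by
  have central := Subgroup.mem_center_iff.mp (tmul_self_mem_center w)
  rw [tmul_mul_left, tmul_mul_right w, tmul_mul_right ⁅a, b⁆ ⁅a, b⁆ w,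
    tmul_commutatorElement_self, one_mul]
  simp only [act_commutatorElement]
  rw [tmul_commutatorElement_left, tmul_commutatorElement_right]
  calc _ = tmul a b * act w (tmul a b) * tmul w w * (tmul a b * act w (tmul a b))⁻¹ := by group
    _ = tmul w w := by rw [central, mul_inv_cancel_right]

lemma tmul_self_mul_of_mem_commutator {c : G} (hc : c ∈ commutator G) (w : G) :
    tmul (c * w) (c * w) = tmul w w := by
  rw [commutator_eq_closure] at hc
  induction hc using Subgroup.closure_induction generalizing w with
  | mem _ hx =>
    obtain ⟨a, b, rfl⟩ := hx
    exact tmul_self_commutatorElement_mul a b w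
  | one => rw [one_mul]
  | mul c d _ _ ihc ihd => rw [mul_assoc, ihc, ihd]
  | inv c _ ih => rw [← ih, mul_inv_cancel_left]

lemma tmul_self_eq_of_abelianization_eq {x y : G}
    (hxy : Abelianization.of x = Abelianization.of y) : tmul x x = tmul y y := by
  have hc : y * x⁻¹ ∈ commutator G := by
    rw [← Abelianization.ker_of, MonoidHom.mem_ker, map_mul, map_inv, hxy, mul_inv_cancel]
  simpa only [inv_mul_cancel_right] using (tmul_self_mul_of_mem_commutator hc x).symm

lemma nabla_eq_closure : nabla G = Subgroup.closure {t | ∃ x : G, t = tmul x x} := by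
  have le_center : Subgroup.closure {t | ∃ x : G, t = tmul x x} ≤ Subgroup.center (TS G) := by
    rw [Subgroup.closure_le]
    rintro _ ⟨x, rfl⟩
    exact tmul_self_mem_center x
  have : (Subgroup.closure {t | ∃ x : G, t = tmul x x}).Normal :=
    ⟨fun n hn g => by rwa [Subgroup.mem_center_iff.mp (le_center hn) g, mul_inv_cancel_right]⟩
  exact le_antisymm (Subgroup.normalClosure_le_normal Subgroup.subset_closure)
    Subgroup.closure_le_normalClosure

lemma tmul_mul_left_of_commute {g g' h : G} (hg' : Commute g g') (hh : Commute g h) :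
    tmul (g * g') h = tmul g' h * tmul g h := by
  rw [tmul_mul_left, act_tmul, hg'.eq, hh.eq, mul_inv_cancel_right, mul_inv_cancel_right]

lemma tmul_mul_right_of_commute {g h h' : G} (hg : Commute h g) (hh' : Commute h h') :
    tmul g (h * h') = tmul g h * tmul g h' := by
  rw [tmul_mul_right, act_tmul, hg.eq, hh'.eq, mul_inv_cancel_right, mul_inv_cancel_right]

def liftAbelianization {C : Type*} [CommGroup C]
    (F : Abelianization G →* Abelianization G →* C) : TS G →* C :=
  PresentedGroup.toGroup (f := fun x : G × G => F (Abelianization.of x.1) (Abelianization.of x.2))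
    (by
      rintro r (⟨g, g', h, rfl⟩ | ⟨g, h, h', rfl⟩) <;>
        simp only [map_mul, map_inv, FreeGroup.lift_apply_of, mul_inv_cancel_comm,
          MonoidHom.mul_apply, mul_inv_eq_one]
      exact mul_comm _ _)

@[simp] lemma liftAbelianization_tmul {C : Type*} [CommGroup C]
    (F : Abelianization G →* Abelianization G →* C) (g h : G) :
    liftAbelianization F (tmul g h) = F (Abelianization.of g) (Abelianization.of h) :=
  PresentedGroup.toGroup.of _

lemma liftAbelianization_mem {C : Type*} [CommGroup C]
    {F : Abelianization G →* Abelianization G →* C} {S : Subgroup C} (hF : ∀ a b, F a b ∈ S)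
    (t : TS G) : liftAbelianization F t ∈ S :=
  PresentedGroup.generated_by _ (S.comap (liftAbelianization F))
    (fun x => show liftAbelianization F (tmul x.1 x.2) ∈ S by
      rw [liftAbelianization_tmul]; exact hF _ _) t

def tmulBilin {A : Type*} [CommGroup A] (σ : A →* G) : A →* A →* Subgroup.center (TS G) :=
  have hσ (a b : A) : Commute (σ a) (σ b) := (Commute.all a b).map σ
  MonoidHom.mk'
    (fun a => MonoidHom.mk' (fun b => ⟨tmul (σ a) (σ b), tmul_mem_center_of_commute (hσ a b)⟩)
      fun b b' => Subtype.ext <| by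
        simp only [map_mul, Subgroup.coe_mul, tmul_mul_right_of_commute (hσ b a) (hσ b b')])
    fun a a' => MonoidHom.ext fun b => Subtype.ext <| by
      simp only [map_mul, MonoidHom.mul_apply, MonoidHom.mk'_apply, Subgroup.coe_mul,
        tmul_mul_left_of_commute (hσ a a') (hσ a b)]
      exact (Subgroup.mem_center_iff.mp (tmul_mem_center_of_commute (hσ a' b)) _).symm

@[simp] lemma coe_tmulBilin_apply {A : Type*} [CommGroup A] (σ : A →* G) (a b : A) :
    (tmulBilin σ a b : TS G) = tmul (σ a) (σ b) :=
  rfl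

theorem exists_retraction_nabla [Group.FG (Abelianization G)] (σ : Abelianization G →* G)
    (hσ : ∀ a, Abelianization.of (σ a) = a) :
    ∃ α : TS G →* nabla G, ∀ y : nabla G, α y = y := by
  obtain ⟨d⟩ := CyclicDecomposition.nonempty_of_fg (Abelianization G)
  let : LinearOrder d.ι := LinearOrder.lift' _ (Fintype.equivFin d.ι).injective
  let α := liftAbelianization (d.triangular (tmulBilin σ))
  have α_tmul_self (x : G) : (α (tmul x x) : TS G) = tmul x x := by
    rw [liftAbelianization_tmul, d.triangular_apply_self, coe_tmulBilin_apply]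
    exact tmul_self_eq_of_abelianization_eq (hσ _)
  have diag_le : Subgroup.closure (Set.range fun a => tmulBilin σ a a)
      ≤ (nabla G).comap (Subgroup.center (TS G)).subtype := by
    rw [Subgroup.closure_le]
    rintro _ ⟨a, rfl⟩
    exact Subgroup.subset_normalClosure ⟨σ a, rfl⟩
  have α_mem (t : TS G) : (α t : TS G) ∈ nabla G :=
    liftAbelianization_mem (fun a b => diag_le (d.triangular_mem_closure _ a b)) t
  refine ⟨((Subgroup.center (TS G)).subtype.comp α).codRestrict _ α_mem, fun y => Subtype.ext ?_⟩
  suffices nabla G ≤ MonoidHom.eqLocus ((Subgroup.center (TS G)).subtype.comp α) (.id _) from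
    this y.2
  rw [nabla_eq_closure, Subgroup.closure_le]
  rintro _ ⟨x, rfl⟩
  exact α_tmul_self x

end NATensor

open NATensor in
/-- if `G_ab` is finitely generated and the derived subgroup `[G,G]` has a
complement in `G`, then `1 → ∇(G) → G ⊗ G → G ∧ G → 1` splits on the left; consequently
`G ⊗ G ≅ ∇(G) × (G ∧ G)` and `J(G) ≅ M(G) × ∇(G)`, i.e.
`π₃(SK(G,1)) ≅ H₂(G) × ∇(G)`. -/
theorem tensor_square_splits_of_complemented_commutator (G : Type*) [Group G]
    [Group.FG (Abelianization G)]
    (B : Subgroup G) (hB1 : commutator G ⊔ B = ⊤) (hB2 : commutator G ⊓ B = ⊥) :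
    (∃ α : TS G →* ↥(nabla G), ∀ y : ↥(nabla G), α (y : TS G) = y) ∧
    Nonempty (TS G ≃* ↥(nabla G) × ES G) ∧
    Nonempty (↥(J G) ≃* ↥(M G) × ↥(nabla G)) := by
  obtain ⟨σ, hσ⟩ := Abelianization.exists_section_of_sup_eq_top_of_inf_eq_bot hB1 hB2
  obtain ⟨α, hα⟩ := exists_retraction_nabla σ hσ
  have hM : (J G).map (QuotientGroup.mk' (nabla G)) = M G :=
    (QuotientGroup.ker_lift _ _ _).symm
  refine ⟨⟨α, hα⟩, ⟨QuotientGroup.mulEquivProdOfRetraction α hα⟩, ⟨?_⟩⟩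
  exact (Subgroup.mulEquivProdMapOfRetraction α hα (nabla_le_ker_kappa G)).trans <|
    (MulEquiv.prodCongr (.refl _) (.subgroupCongr hM)).trans MulEquiv.prodComm
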